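/- Let N be a normal subgroup of a finite group G and let p be an odd prime. If the coset Nx is a real element of G/N whose order is a power of p, then Nx = Ny for some element y of G such that y is real in G and the order of y is a power of p. -/

import Mathlib

/-!
Let `K` be the preimage of `⟨Nx⟩` and `P` a Sylow `p`-subgroup of `K`; since `⟨Nx⟩` is a
`p`-group, `P` maps onto it. An element inverting `Nx` modulo `N` normalizes `K`, so by
Frattini's argument it can be corrected by an element of `K` (which commutes with `Nx` modulo `N`)
to normalize `P`, and then replaced by an odd power `t` of itself of `2`-power order.
Now `v ↦ t v⁻¹ t⁻¹` is a permutation of `2`-power order of the elements of `P` lying over `Nx`,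
a coset of `P ∩ N`, whose size is an odd power of `p`. A fixed point `y` is a `p`-element
lying over `Nx` with `t y t⁻¹ = y⁻¹`.
-/

open Subgroup Pointwise

theorem Equiv.Perm.exists_mem_fixed_of_odd_card {α : Type*} (σ : Equiv.Perm α) {e : ℕ}
    (hσ : σ ^ 2 ^ e = 1) {s : Set α} [Finite s] (hs : ∀ a, σ a ∈ s ↔ a ∈ s)
    (hodd : Odd (Nat.card s)) : ∃ a ∈ s, σ a = a := by
  have : Fact (Nat.Prime 2) := ⟨Nat.prime_two⟩
  have := Fintype.ofFinite s
  obtain ⟨⟨a, ha⟩, hfix⟩ :=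
    Equiv.Perm.exists_fixed_point_of_prime (σ := σ.subtypePerm hs) (n := e)
      (by rwa [← Nat.card_eq_fintype_card, ← even_iff_two_dvd, Nat.not_even_iff_odd])
      (by rw [Equiv.Perm.subtypePerm_pow]; ext; simp [hσ])
  exact ⟨a, ha, congrArg Subtype.val hfix⟩

section

variable {G : Type*} [Group G]

theorem conj_pow_odd_eq_inv {c a : G} (h : c * a * c⁻¹ = a⁻¹) {m : ℕ} (hm : Odd m) :
    c ^ m * a * (c ^ m)⁻¹ = a⁻¹ := by
  have hsq : Commute (c ^ 2) a := by
    rw [Commute, SemiconjBy, ← mul_inv_eq_iff_eq_mul]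
    calc c ^ 2 * a * (c ^ 2)⁻¹ = (c * (c * a * c⁻¹)⁻¹ * c⁻¹)⁻¹ := by simp [sq, mul_assoc]
      _ = a := by rw [h, inv_inv, h, inv_inv]
  obtain ⟨j, rfl⟩ := hm
  rw [pow_succ, pow_mul, mul_inv_rev]
  calc (c ^ 2) ^ j * c * a * (c⁻¹ * ((c ^ 2) ^ j)⁻¹)
      = (c ^ 2) ^ j * (c * a * c⁻¹) * ((c ^ 2) ^ j)⁻¹ := by group
    _ = a⁻¹ := by rw [h, ((hsq.pow_left j).inv_right).eq, mul_inv_cancel_right]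

theorem mul_conj_eq_inv_of_mem_zpowers {b c a : G} (hb : b ∈ zpowers a)
    (h : c * a * c⁻¹ = a⁻¹) : b * c * a * (b * c)⁻¹ = a⁻¹ := by
  obtain ⟨j, rfl⟩ := hb
  calc a ^ j * c * a * (a ^ j * c)⁻¹ = a ^ j * (c * a * c⁻¹) * (a ^ j)⁻¹ := by group
    _ = a⁻¹ := by rw [h, (((Commute.refl a).zpow_left j).inv_right).eq, mul_inv_cancel_right]

theorem mem_normalizer_zpowers_of_conj_eq_inv {c a : G} (h : c * a * c⁻¹ = a⁻¹) :
    c ∈ normalizer (zpowers a : Set G) := by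
  rw [mem_normalizer_iff_map_conj_eq, MonoidHom.map_zpowers]
  simp [h]

theorem exists_odd_pow_pow_two_pow_eq_one [Finite G] (g : G) :
    ∃ m, Odd m ∧ ∃ e, (g ^ m) ^ 2 ^ e = 1 := by
  obtain ⟨e, m, hm, he⟩ := Nat.exists_eq_two_pow_mul_odd (orderOf_pos g).ne'
  refine ⟨m, hm, e, ?_⟩
  rw [← pow_mul, mul_comm, ← he, pow_orderOf_eq_one]

theorem Sylow.exists_mem_map_subtype_eq [Finite G] {p : ℕ} [Fact p.Prime] {Q : Type*} [Group Q]
    {f : G →* Q} (hf : Function.Surjective f) {A : Subgroup Q} (hA : IsPGroup p A)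
    (P : Sylow p (A.comap f)) {a : Q} (ha : a ∈ A) :
    ∃ u ∈ P.map (A.comap f).subtype, f u = a := by
  have hφ := f.subgroupComap_surjective_of_surjective A hf
  have htop : (P.mapSurjective hφ : Subgroup A) = ⊤ :=
    ((P.mapSurjective hφ).is_maximal' (hA.to_subgroup ⊤) le_top).symm
  obtain ⟨b, hb, hba⟩ : (⟨a, ha⟩ : A) ∈ P.map (f.subgroupComap A) := by
    rw [← Sylow.coe_mapSurjective hφ, htop]; exact mem_top _
  exact ⟨b, mem_map_of_mem _ hb, congrArg Subtype.val hba⟩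

theorem Sylow.exists_mul_mem_normalizer_map {p : ℕ} [Fact p.Prime] {K : Subgroup G}
    [Finite (Sylow p K)] (P : Sylow p K) {g : G} (hg : g ∈ normalizer (K : Set G)) :
    ∃ k ∈ K, k * g ∈ normalizer ((P.map K.subtype : Subgroup G) : Set G) := by
  let n : normalizer (K : Set G) := ⟨g, hg⟩
  have hn : ∀ a : K, ((n • a : K) : G) = g * a * g⁻¹ := fun _ ↦ rfl
  obtain ⟨k, hk⟩ := MulAction.exists_smul_eq K (n • P) P
  refine ⟨k, k.2, ?_⟩
  rw [mem_normalizer_iff_map_conj_eq]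
  conv_rhs => rw [← hk]
  ext x
  simp only [Sylow.smul_def, Sylow.pointwise_smul_def, mem_map, mem_smul_pointwise_iff_exists]
  constructor
  · rintro ⟨_, ⟨a, ha, rfl⟩, rfl⟩
    exact ⟨_, ⟨_, ⟨a, ha, rfl⟩, rfl⟩, by simp [hn, mul_assoc]⟩
  · rintro ⟨_, ⟨_, ⟨a, ha, rfl⟩, rfl⟩, rfl⟩
    exact ⟨_, ⟨a, ha, rfl⟩, by simp [hn, mul_assoc]⟩

theorem exists_conj_eq_inv_of_odd_card {t : G} {e : ℕ} (ht : t ^ 2 ^ e = 1) {s : Set G}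
    [Finite s] (hs : ∀ v, t * v⁻¹ * t⁻¹ ∈ s ↔ v ∈ s) (hodd : Odd (Nat.card s)) :
    ∃ y ∈ s, t * y * t⁻¹ = y⁻¹ := by
  let σ : Equiv.Perm G := (Equiv.inv G).trans (MulAut.conj t).toEquiv
  have hσsq : σ ^ 2 = MulAut.toPerm G (MulAut.conj (t ^ 2)) := by
    ext v
    change t * (t * v⁻¹ * t⁻¹)⁻¹ * t⁻¹ = t ^ 2 * v * (t ^ 2)⁻¹
    simp only [sq]; group
  have hσ : σ ^ 2 ^ (e + 1) = 1 := by
    rw [pow_succ', pow_mul, hσsq, ← map_pow, ← map_pow, ← pow_mul, mul_comm, pow_mul, ht,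
      one_pow, map_one, map_one]
  obtain ⟨y, hy, hfix⟩ := σ.exists_mem_fixed_of_odd_card hσ hs hodd
  refine ⟨y, hy, ?_⟩
  change t * y⁻¹ * t⁻¹ = y at hfix
  calc t * y * t⁻¹ = (t * y⁻¹ * t⁻¹)⁻¹ := by simp [mul_assoc]
    _ = y⁻¹ := by rw [hfix]

theorem card_inter_fiber_eq_card_inf_ker {Q : Type*} [Group Q] (f : G →* Q) (P : Subgroup G)
    {u : G} (hu : u ∈ P) :
    Nat.card {v | v ∈ P ∧ f v = f u} = Nat.card (P ⊓ f.ker : Subgroup G) := by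
  have : {v | v ∈ P ∧ f v = f u} = u • ((P ⊓ f.ker : Subgroup G) : Set G) := by
    ext v
    rw [Set.mem_smul_set_iff_inv_smul_mem, smul_eq_mul, SetLike.mem_coe, mem_inf,
      MonoidHom.mem_ker, map_mul, map_inv, inv_mul_eq_one, P.mul_mem_cancel_left (P.inv_mem hu),
      eq_comm]
    rfl
  rw [this, Nat.card_coe_set_eq, Set.ncard_smul_set]
  rfl

theorem exists_mem_fiber_conj_eq_inv [Finite G] {p : ℕ} [Fact p.Prime] (hodd : Odd p)
    {Q : Type*} [Group Q] (f : G →* Q) {P : Subgroup G} (hP : IsPGroup p P) {t u : G}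
    (htP : t ∈ normalizer (P : Set G)) {e : ℕ} (ht : t ^ 2 ^ e = 1) (hu : u ∈ P)
    (htu : f t * f u * (f t)⁻¹ = (f u)⁻¹) :
    ∃ y ∈ P, f y = f u ∧ t * y * t⁻¹ = y⁻¹ := by
  have hfu : f t * (f u)⁻¹ * (f t)⁻¹ = f u := by
    calc f t * (f u)⁻¹ * (f t)⁻¹ = (f t * f u * (f t)⁻¹)⁻¹ := by simp [mul_assoc]
      _ = f u := by rw [htu, inv_inv]
  set s := {v | v ∈ P ∧ f v = f u}
  have hs : ∀ v, t * v⁻¹ * t⁻¹ ∈ s ↔ v ∈ s := by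
    intro v
    simp only [s, Set.mem_ofPred_eq, ← (mem_normalizer_iff.mp htP), inv_mem_iff, map_mul, map_inv]
    nth_rw 1 [← hfu]
    rw [mul_left_inj, mul_right_inj, inv_inj]
  obtain ⟨n, hn⟩ := IsPGroup.iff_card.mp hP.to_inf_left
  obtain ⟨y, ⟨hyP, hyu⟩, hy⟩ := exists_conj_eq_inv_of_odd_card ht hs (by
    rw [card_inter_fiber_eq_card_inf_ker f P hu, hn]; exact hodd.pow)
  exact ⟨y, hyP, hyu, hy⟩

end

/-- If `N ⊴ G`, `p` is an odd prime and `Nx` is a real element of `G/N` of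
`p`-power order, then `Nx = Ny` for some real element `y` of `G` of `p`-power
order. -/
theorem stmt_8 (G : Type*) [Group G] [Finite G] (N : Subgroup G) [N.Normal]
    (p : ℕ) (hp : p.Prime) (hodd : Odd p) (x : G)
    (hreal : IsConj ((x : G ⧸ N)) ((x : G ⧸ N))⁻¹)
    (horder : ∃ a : ℕ, orderOf (x : G ⧸ N) = p ^ a) :
    ∃ y : G, (y : G ⧸ N) = (x : G ⧸ N) ∧ IsConj y y⁻¹ ∧
      ∃ b : ℕ, orderOf y = p ^ b := by
  have := Fact.mk hp
  let π := QuotientGroup.mk' N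
  obtain ⟨a, ha⟩ := horder
  obtain ⟨c, hc⟩ := isConj_iff.mp hreal
  obtain ⟨g, rfl⟩ := QuotientGroup.mk'_surjective N c
  let K := (zpowers (π x)).comap π
  obtain ⟨P⟩ := Sylow.nonempty (p := p) (G := K)
  obtain ⟨u, hu, hux⟩ := P.exists_mem_map_subtype_eq (QuotientGroup.mk'_surjective N)
    (IsPGroup.of_card ((Nat.card_zpowers _).trans ha)) (mem_zpowers (π x))
  have hgK : g ∈ normalizer (K : Set G) :=
    le_normalizer_comap π (mem_normalizer_zpowers_of_conj_eq_inv hc)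
  obtain ⟨k, hk, hkg⟩ := P.exists_mul_mem_normalizer_map hgK
  obtain ⟨m, hm, e, he⟩ := exists_odd_pow_pow_two_pow_eq_one (k * g)
  have hinv : π ((k * g) ^ m) * π u * (π ((k * g) ^ m))⁻¹ = (π u)⁻¹ := by
    rw [map_pow, map_mul, hux]
    exact conj_pow_odd_eq_inv (mul_conj_eq_inv_of_mem_zpowers hk hc) hm
  obtain ⟨y, hyP, hyu, hy⟩ :=
    exists_mem_fiber_conj_eq_inv hodd π (P.2.map _) (pow_mem hkg m) he hu hinv
  obtain ⟨b, hb⟩ := IsPGroup.iff_orderOf.mp (P.2.map _) ⟨y, hyP⟩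
  exact ⟨y, hyu.trans hux, isConj_iff.mpr ⟨_, hy⟩, b, by rwa [orderOf_mk] at hb⟩
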